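/- For every integer n ≥ 1, the central symmetric binomial probability satisfies (πn)^{-1/2} · exp(−1/(7n)) < a_{0,n} < (πn)^{-1/2} · exp(−1/(9n)). -/

import Mathlib

/-!
Write `s n = n! / (√(2n) (n/e)^n)` for the Stirling sequence. Then
`a0 n · √(πn) = √π s(2n) / s(n)²`, so `log (a0 n · √(πn)) = r(2n) - 2 r(n)` with
`r n = log s(n) - log √π`, and the theorem follows from Robbins' bounds
`1/(12n+1) ≤ r n ≤ 1/(12n)`. These come from telescoping the stepwise bounds
`1/(12n+1) - 1/(12(n+1)+1) ≤ log s(n) - log s(n+1) ≤ 1/(12n) - 1/(12(n+1))`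
against `s n → √π`.
-/

open Real

/-- `a0 n = C(2n, n) · 2^(−2n)`: the central symmetric binomial probability. -/
noncomputable def a0 (n : ℕ) : ℝ :=
  ((2 * n).choose n : ℝ) * (2 : ℝ) ^ (-(2 * (n : ℤ)))

open Filter Topology

theorem sub_le_of_tendsto_of_sub_succ_le {u v : ℕ → ℝ} {l : ℝ}
    (hu : Tendsto u atTop (𝓝 l)) (hv : Tendsto v atTop (𝓝 0))
    (h : ∀ n, u n - u (n + 1) ≤ v n - v (n + 1)) (n : ℕ) :
    u n - l ≤ v n := by
  have hmono : Monotone fun k ↦ u k - v k := monotone_nat_of_le_succ fun k ↦ by linarith [h k]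
  linarith [hmono.ge_of_tendsto (by simpa using hu.sub hv) n]

theorem le_sub_of_tendsto_of_sub_succ_le {u v : ℕ → ℝ} {l : ℝ}
    (hu : Tendsto u atTop (𝓝 l)) (hv : Tendsto v atTop (𝓝 0))
    (h : ∀ n, v n - v (n + 1) ≤ u n - u (n + 1)) (n : ℕ) :
    v n ≤ u n - l := by
  have := sub_le_of_tendsto_of_sub_succ_le hu.neg (by simpa using hv.neg)
    (fun k ↦ by linarith [h k]) n
  linarith

theorem tendsto_one_div_mul_natCast_add (a b : ℝ) (ha : 0 < a) :
    Tendsto (fun n : ℕ ↦ 1 / (a * n + b)) atTop (𝓝 0) := by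
  simp only [one_div]
  exact (tendsto_atTop_add_const_right _ b
    (tendsto_natCast_atTop_atTop.const_mul_atTop ha)).inv_tendsto_atTop

namespace Stirling

-- The first term `1 / (3 (2n+1)²)` of the series for the difference already suffices.
theorem sub_le_log_stirlingSeq_sdiff {n : ℕ} (hn : n ≠ 0) :
    1 / (12 * n + 1) - 1 / (12 * (n + 1) + 1) ≤
      log (stirlingSeq n) - log (stirlingSeq (n + 1)) := by
  obtain ⟨m, rfl⟩ := Nat.exists_eq_succ_of_ne_zero hn
  have hfirst := le_hasSum (log_stirlingSeq_sdiff_hasSum m) 0 fun _ _ ↦ by positivity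
  refine le_trans ?_ hfirst
  push_cast
  rw [div_sub_div _ _ (by positivity) (by positivity), div_le_iff₀ (by positivity)]
  field_simp
  nlinarith

theorem tendsto_log_stirlingSeq_succ :
    Tendsto (fun n ↦ log (stirlingSeq (n + 1))) atTop (𝓝 (log √π)) :=
  ((continuousAt_log (by positivity)).tendsto).comp
    (tendsto_stirlingSeq_sqrt_pi.comp (tendsto_add_atTop_nat 1))

theorem log_stirlingSeq_sub_log_sqrt_pi_le {n : ℕ} (hn : n ≠ 0) :
    log (stirlingSeq n) - log √π ≤ 1 / (12 * n) := by
  obtain ⟨m, rfl⟩ := Nat.exists_eq_succ_of_ne_zero hn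
  have := sub_le_of_tendsto_of_sub_succ_le tendsto_log_stirlingSeq_succ
    (v := fun k : ℕ ↦ 1 / (12 * k + 12)) (by simpa using tendsto_one_div_mul_natCast_add 12 12)
    (fun k ↦ ?_) m
  · simpa [mul_add] using this
  · grw [log_stirlingSeq_sdiff_le]
    push_cast
    exact le_of_eq (by field_simp; ring)

theorem le_log_stirlingSeq_sub_log_sqrt_pi {n : ℕ} (hn : n ≠ 0) :
    1 / (12 * n + 1) ≤ log (stirlingSeq n) - log √π := by
  obtain ⟨m, rfl⟩ := Nat.exists_eq_succ_of_ne_zero hn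
  have := le_sub_of_tendsto_of_sub_succ_le tendsto_log_stirlingSeq_succ
    (v := fun k : ℕ ↦ 1 / (12 * k + 13)) (tendsto_one_div_mul_natCast_add 12 13 (by norm_num))
    (fun k ↦ ?_) m
  · push_cast; convert this using 2; ring
  · convert sub_le_log_stirlingSeq_sdiff k.succ_ne_zero using 2 <;> push_cast <;> ring

theorem centralBinom_div_four_pow_mul_sqrt {n : ℕ} (hn : n ≠ 0) :
    n.centralBinom / 4 ^ n * √(π * n) = √π * stirlingSeq (2 * n) / stirlingSeq n ^ 2 := by
  rw [Nat.centralBinom_eq_two_mul_choose, Nat.cast_choose ℝ (by omega : n ≤ 2 * n),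
    show 2 * n - n = n by omega, stirlingSeq, stirlingSeq]
  simp_rw [div_pow, mul_pow]
  rw [sq_sqrt (by positivity)]
  push_cast
  simp [field, ← exp_nsmul]
  rw [mul_pow, pow_mul, pow_mul']
  norm_num

end Stirling

open Stirling

theorem a0_eq_centralBinom_div (n : ℕ) : a0 n = n.centralBinom / 4 ^ n := by
  rw [a0, Nat.centralBinom_eq_two_mul_choose, zpow_neg, zpow_mul, zpow_natCast, div_eq_mul_inv]
  norm_num

theorem stmt_6 (n : ℕ) (hn : 1 ≤ n) :
    (Real.sqrt (Real.pi * n))⁻¹ * Real.exp (-(1 / (7 * (n : ℝ)))) < a0 n ∧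
    a0 n < (Real.sqrt (Real.pi * n))⁻¹ * Real.exp (-(1 / (9 * (n : ℝ)))) := by
  have hn₀ : n ≠ 0 := by omega
  have h2n₀ : 2 * n ≠ 0 := by omega
  have hn₁ : (1 : ℝ) ≤ n := by exact_mod_cast hn
  have hs : 0 < stirlingSeq n := by grw [← sqrt_pi_le_stirlingSeq hn₀]; positivity
  have hs₂ : 0 < stirlingSeq (2 * n) := by grw [← sqrt_pi_le_stirlingSeq h2n₀]; positivity
  have hlog : log (√π * stirlingSeq (2 * n) / stirlingSeq n ^ 2) =
      (log (stirlingSeq (2 * n)) - log √π) - 2 * (log (stirlingSeq n) - log √π) := by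
    rw [log_div (by positivity) (by positivity), log_mul (by positivity) hs₂.ne', log_pow]
    push_cast; ring
  have hr₂ := le_log_stirlingSeq_sub_log_sqrt_pi h2n₀
  have hr₂' := log_stirlingSeq_sub_log_sqrt_pi_le h2n₀
  have hr := le_log_stirlingSeq_sub_log_sqrt_pi hn₀
  have hr' := log_stirlingSeq_sub_log_sqrt_pi_le hn₀
  push_cast at hr₂ hr₂'
  have hsqrt : 0 < √(π * n) := by positivity
  rw [a0_eq_centralBinom_div, inv_mul_lt_iff₀ hsqrt, lt_inv_mul_iff₀ hsqrt,
    mul_comm (√(π * n)), centralBinom_div_four_pow_mul_sqrt hn₀,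
    ← lt_log_iff_exp_lt (by positivity), ← log_lt_iff_lt_exp (by positivity), hlog]
  constructor
  · have : 2 * (1 / (12 * n)) - 1 / (7 * n) < 1 / (12 * (2 * n) + 1 : ℝ) := by
      rw [show 2 * (1 / (12 * n)) - 1 / (7 * n) = 1 / (42 * n : ℝ) by field_simp; ring]
      gcongr
      linarith
    linarith
  · have : 1 / (12 * (2 * n)) + 1 / (9 * n) < 2 * (1 / (12 * n + 1) : ℝ) := by
      rw [show 1 / (12 * (2 * n)) + 1 / (9 * n) = 11 / (72 * n : ℝ) by field_simp; ring,
        div_lt_iff₀ (by positivity)]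
      field_simp
      linarith
    linarith
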